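/- Let n ≥ 4 be an integer and let x : [t0, t*) → ℝ be a Schwarzschild profile solution. Then t* ≤ h0, where h0 = t0 + ∫_{√(R0²−t0²)}^{+∞} dμ/√((R0/t0)²·(μ/√(R0²−t0²))^{2(n−2)} − 1) < +∞. In particular every Schwarzschild profile solution with n ≥ 4 blows up in finite time, and the corresponding rotationally symmetric free-boundary minimal hypersurface is contained in the slab t0 ≤ xₙ ≤ h0. -/

import Mathlib

/-!
Write `w = t x' - x`. The free-boundary condition gives `w t0 = 0`, and `w' = t x''` where the
ODE forces `x'' > 0` as long as `w ≥ 0`; so `w` never becomes negative. Hence `x' > 0` and `x`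
increases from `x t0 = √(R0² - t0²)`. Along the ODE, `log (1 + x'²) - 2 (n - 2) log x` is
nondecreasing, and comparing with its value at `t0` gives
`x' ≥ √((R0/t0)² (x / x t0)^(2(n-2)) - 1)`. Separating variables,
`t - t0 ≤ ∫_{x t0}^{x t} dμ / √(…)`, which is at most the improper integral; for `n ≥ 4` the
integrand is `O(μ^(-3/2))`, so that integral converges.
-/

/-- The coefficient function χ(x,t) = 2m(n−1)/(2(x²+t²)^n + m(x²+t²)). -/
noncomputable def schChi (n : ℕ) (m x t : ℝ) : ℝ :=
  2 * m * ((n : ℝ) - 1) / (2 * (x ^ 2 + t ^ 2) ^ n + m * (x ^ 2 + t ^ 2))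

/-- A Schwarzschild profile solution on the interval [t0, t*), with t* ∈ ℝ ∪ {+∞}
encoded as an `EReal`.  The functions `x'` and `x''` are the first and second
derivatives of the twice continuously differentiable positive function `x`,
which solves the profile ODE with the free-boundary initial conditions. -/
structure IsSchwarzschildProfile (n : ℕ) (m R0 t0 : ℝ) (tstar : EReal)
    (x x' x'' : ℝ → ℝ) : Prop where
  hasDeriv : ∀ t : ℝ, t0 ≤ t → (t : EReal) < tstar → HasDerivAt x (x' t) t
  hasDeriv2 : ∀ t : ℝ, t0 ≤ t → (t : EReal) < tstar → HasDerivAt x' (x'' t) t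
  cont2 : ContinuousOn x'' {t : ℝ | t0 ≤ t ∧ (t : EReal) < tstar}
  pos : ∀ t : ℝ, t0 ≤ t → (t : EReal) < tstar → 0 < x t
  ode : ∀ t : ℝ, t0 ≤ t → (t : EReal) < tstar →
    x'' t = ((t * x' t - x t) * schChi n m (x t) t + ((n : ℝ) - 2) / x t)
      * (1 + (x' t) ^ 2)
  init : x t0 = Real.sqrt (R0 ^ 2 - t0 ^ 2)
  initDeriv : t0 * x' t0 = x t0

open MeasureTheory

open Set

lemma monotoneOn_of_hasDerivAt_nonneg {D : Set ℝ} (hD : Convex ℝ D) {f f' : ℝ → ℝ}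
    (hf : ∀ t ∈ D, HasDerivAt f (f' t) t) (hf' : ∀ t ∈ D, 0 ≤ f' t) : MonotoneOn f D :=
  monotoneOn_of_hasDerivWithinAt_nonneg hD
    (fun t ht => (hf t ht).continuousAt.continuousWithinAt)
    (fun t ht => (hf t (interior_subset ht)).hasDerivWithinAt)
    (fun t ht => hf' t (interior_subset ht))

/-- The integrand of the slab height `h0`, with `c = (R0/t0)²`, `a = √(R0² - t0²)` and
`k = 2(n - 2)`. -/
noncomputable def slabIntegrand (c a : ℝ) (k : ℕ) (μ : ℝ) : ℝ :=
  1 / √(c * (μ / a) ^ k - 1)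

section slabIntegrand

variable {c a : ℝ} {k : ℕ}

lemma slabIntegrand_nonneg (μ : ℝ) : 0 ≤ slabIntegrand c a k μ := by
  unfold slabIntegrand; positivity

lemma one_lt_mul_div_pow (hc : 1 < c) (ha : 0 < a) {μ : ℝ} (hμ : a ≤ μ) :
    1 < c * (μ / a) ^ k := by
  have : 1 ≤ (μ / a) ^ k := one_le_pow₀ ((one_le_div ha).mpr hμ)
  nlinarith

lemma continuousOn_slabIntegrand (hc : 1 < c) (ha : 0 < a) :
    ContinuousOn (slabIntegrand c a k) (Ici a) :=
  continuousOn_const.div (by fun_prop) fun μ hμ =>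
    (Real.sqrt_pos.mpr (sub_pos.mpr (one_lt_mul_div_pow hc ha hμ))).ne'

lemma slabIntegrand_le_rpow (hc : 1 < c) (ha : 0 < a) (hk : 3 ≤ k) {μ : ℝ} (hμ : a ≤ μ) :
    slabIntegrand c a k μ ≤ ((c - 1) / a ^ 3) ^ (-(1 / 2) : ℝ) * μ ^ (-(3 / 2) : ℝ) := by
  have hμ0 : 0 < μ := ha.trans_le hμ
  have hr : 1 ≤ μ / a := (one_le_div ha).mpr hμ
  have hlow : (c - 1) / a ^ 3 * μ ^ 3 ≤ c * (μ / a) ^ k - 1 := by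
    have h3k : (μ / a) ^ 3 ≤ (μ / a) ^ k := pow_le_pow_right₀ hr hk
    have h1 : 1 ≤ (μ / a) ^ 3 := one_le_pow₀ hr
    have : (c - 1) / a ^ 3 * μ ^ 3 = (c - 1) * (μ / a) ^ 3 := by field_simp
    rw [this]; nlinarith
  have hc1 : 0 < c - 1 := sub_pos.mpr hc
  have hpos : 0 < (c - 1) / a ^ 3 * μ ^ 3 := by positivity
  calc slabIntegrand c a k μ = (c * (μ / a) ^ k - 1) ^ (-(1 / 2) : ℝ) := by
        rw [slabIntegrand, Real.sqrt_eq_rpow, Real.rpow_neg (hpos.le.trans hlow), one_div]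
    _ ≤ ((c - 1) / a ^ 3 * μ ^ 3) ^ (-(1 / 2) : ℝ) :=
        Real.rpow_le_rpow_of_nonpos hpos hlow (by norm_num)
    _ = ((c - 1) / a ^ 3) ^ (-(1 / 2) : ℝ) * μ ^ (-(3 / 2) : ℝ) := by
        rw [Real.mul_rpow (by positivity) (by positivity), ← Real.rpow_natCast μ 3,
          ← Real.rpow_mul hμ0.le]
        norm_num

lemma integrableOn_slabIntegrand (hc : 1 < c) (ha : 0 < a) (hk : 3 ≤ k) :
    IntegrableOn (slabIntegrand c a k) (Ioi a) := by
  refine ((integrableOn_Ioi_rpow_of_lt (a := -(3 / 2)) (by norm_num) ha).const_mul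
    (((c - 1) / a ^ 3) ^ (-(1 / 2) : ℝ))).mono'
    ((continuousOn_slabIntegrand hc ha).mono Ioi_subset_Ici_self |>.aestronglyMeasurable
      measurableSet_Ioi) ((ae_restrict_iff' measurableSet_Ioi).mpr (ae_of_all _ fun μ hμ => ?_))
  rw [Real.norm_of_nonneg (slabIntegrand_nonneg μ)]
  exact slabIntegrand_le_rpow hc ha hk (le_of_lt hμ)

lemma one_le_mul_slabIntegrand (hc : 1 < c) (ha : 0 < a) {y v : ℝ} (hy : a ≤ y) (hv : 0 ≤ v)
    (h : c * (y / a) ^ k ≤ 1 + v ^ 2) : 1 ≤ v * slabIntegrand c a k y := by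
  have hs : 0 < √(c * (y / a) ^ k - 1) :=
    Real.sqrt_pos.mpr (sub_pos.mpr (one_lt_mul_div_pow hc ha hy))
  have hle : √(c * (y / a) ^ k - 1) ≤ v :=
    Real.sqrt_le_iff.mpr ⟨hv, by linarith⟩
  rw [slabIntegrand, mul_one_div, one_le_div hs]
  exact hle

end slabIntegrand

lemma sub_le_setIntegral_Ioi_of_one_le_mul_comp {F x x' : ℝ → ℝ} {a t₀ T : ℝ} (hT : t₀ ≤ T)
    (hF : IntegrableOn F (Ioi a)) (hF₀ : ∀ μ, 0 ≤ F μ) (hFc : ContinuousOn F (Ici a))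
    (hx : ∀ t ∈ Icc t₀ T, HasDerivAt x (x' t) t) (hx' : ContinuousOn x' (Icc t₀ T))
    (hxt₀ : x t₀ = a) (hxa : MapsTo x (Icc t₀ T) (Ici a))
    (h1 : ∀ t ∈ Icc t₀ T, 1 ≤ x' t * F (x t)) :
    T - t₀ ≤ ∫ μ in Ioi a, F μ := by
  rw [← uIcc_of_le hT] at hx hx' hxa
  have haT : a ≤ x T := hxa right_mem_uIcc
  calc T - t₀ = ∫ _ in t₀..T, (1 : ℝ) := by simp
    _ ≤ ∫ t in t₀..T, x' t * F (x t) :=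
        intervalIntegral.integral_mono_on hT intervalIntegrable_const
          ((hx'.mul (hFc.comp (fun t ht => (hx t ht).continuousAt.continuousWithinAt) hxa)
            ).intervalIntegrable) h1
    _ = ∫ μ in a..x T, F μ := by
        rw [← hxt₀]
        exact intervalIntegral.integral_deriv_smul_comp' hx hx'
          (hFc.mono (image_subset_iff.mpr hxa))
    _ ≤ ∫ μ in Ioi a, F μ := by
        rw [intervalIntegral.integral_of_le haT]
        exact setIntegral_mono_set hF (ae_of_all _ hF₀) Ioc_subset_Ioi_self.eventuallyLE

def profileDomain (t0 : ℝ) (tstar : EReal) : Set ℝ := {t | t0 ≤ t ∧ (t : EReal) < tstar}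

section profileDomain

variable {t0 : ℝ} {tstar : EReal}

lemma Icc_subset_profileDomain {T : ℝ} (hT : T ∈ profileDomain t0 tstar) :
    Icc t0 T ⊆ profileDomain t0 tstar :=
  fun _ ht => ⟨ht.1, (EReal.coe_le_coe_iff.mpr ht.2).trans_lt hT.2⟩

lemma convex_profileDomain : Convex ℝ (profileDomain t0 tstar) :=
  OrdConnected.convex ⟨fun _ ha _ hb _ ht =>
    ⟨ha.1.trans ht.1, (EReal.coe_le_coe_iff.mpr ht.2).trans_lt hb.2⟩⟩

end profileDomain

lemma one_lt_div_sq {a b : ℝ} (ha : 0 < a) (hab : a < b) : 1 < (b / a) ^ 2 :=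
  one_lt_pow₀ ((one_lt_div ha).mpr hab) two_ne_zero

lemma sqrt_sq_sub_sq_pos {a b : ℝ} (ha : 0 < a) (hab : a < b) : 0 < √(b ^ 2 - a ^ 2) :=
  Real.sqrt_pos.mpr (by nlinarith)

lemma schChi_pos {n : ℕ} {m x : ℝ} (hn : 2 ≤ n) (hm : 0 < m) (hx : 0 < x) (t : ℝ) :
    0 < schChi n m x t := by
  have hn' : (2 : ℝ) ≤ n := by exact_mod_cast hn
  unfold schChi
  apply div_pos <;> nlinarith [mul_pos hm (by positivity : 0 < x ^ 2 + t ^ 2),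
    pow_pos (by positivity : 0 < x ^ 2 + t ^ 2) n]

lemma hasDerivAt_mul_deriv_sub {f f' f'' : ℝ → ℝ} {t : ℝ} (h₁ : HasDerivAt f (f' t) t)
    (h₂ : HasDerivAt f' (f'' t) t) : HasDerivAt (fun s => s * f' s - f s) (t * f'' t) t := by
  refine (((hasDerivAt_id t).mul h₂).sub h₁).congr_deriv ?_
  simp

namespace IsSchwarzschildProfile

variable {n : ℕ} {m R0 t0 : ℝ} {tstar : EReal} {x x' x'' : ℝ → ℝ} {t : ℝ}

lemma secondDeriv_pos (hx : IsSchwarzschildProfile n m R0 t0 tstar x x' x'') (hn : 3 ≤ n)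
    (hm : 0 < m) (ht : t ∈ profileDomain t0 tstar) (hw : 0 ≤ t * x' t - x t) : 0 < x'' t := by
  have hxt := hx.pos t ht.1 ht.2
  have hn' : (3 : ℝ) ≤ n := by exact_mod_cast hn
  rw [hx.ode t ht.1 ht.2]
  exact mul_pos (add_pos_of_nonneg_of_pos
    (mul_nonneg hw (schChi_pos (by omega) hm hxt t).le) (div_pos (by linarith) hxt))
    (by positivity)

lemma mul_deriv_sub_nonneg (hx : IsSchwarzschildProfile n m R0 t0 tstar x x' x'')
    (hn : 3 ≤ n) (hm : 0 < m) (ht0 : 0 < t0) (ht : t ∈ profileDomain t0 tstar) :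
    0 ≤ t * x' t - x t := by
  have hsub := Icc_subset_profileDomain ht
  have hw : ∀ s ∈ Icc t0 t, HasDerivAt (fun s => s * x' s - x s) (s * x'' s) s :=
    fun s hs => hasDerivAt_mul_deriv_sub (hx.hasDeriv s (hsub hs).1 (hsub hs).2)
      (hx.hasDeriv2 s (hsub hs).1 (hsub hs).2)
  refine image_le_of_deriv_right_lt_deriv_boundary' (f := fun _ => 0) (f' := fun _ => 0)
    continuousOn_const (fun _ _ => hasDerivWithinAt_const _ _ _) (by simp [hx.initDeriv])
    (fun s hs => (hw s hs).continuousAt.continuousWithinAt)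
    (fun s hs => (hw s (Ico_subset_Icc_self hs)).hasDerivWithinAt)
    (fun s hs hzero => mul_pos (ht0.trans_le hs.1)
      (hx.secondDeriv_pos hn hm (hsub (Ico_subset_Icc_self hs)) hzero.le))
    (right_mem_Icc.mpr ht.1)

lemma deriv_pos (hx : IsSchwarzschildProfile n m R0 t0 tstar x x' x'') (hn : 3 ≤ n)
    (hm : 0 < m) (ht0 : 0 < t0) (ht : t ∈ profileDomain t0 tstar) : 0 < x' t :=
  pos_of_mul_pos_right (by linarith [hx.mul_deriv_sub_nonneg hn hm ht0 ht, hx.pos t ht.1 ht.2])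
    (ht0.trans_le ht.1).le

lemma sqrt_le_apply (hx : IsSchwarzschildProfile n m R0 t0 tstar x x' x'') (hn : 3 ≤ n)
    (hm : 0 < m) (ht0 : 0 < t0) (ht : t ∈ profileDomain t0 tstar) :
    √(R0 ^ 2 - t0 ^ 2) ≤ x t := by
  have hmono : MonotoneOn x (profileDomain t0 tstar) :=
    monotoneOn_of_hasDerivAt_nonneg convex_profileDomain (fun s hs => hx.hasDeriv s hs.1 hs.2)
      (fun s hs => (hx.deriv_pos hn hm ht0 hs).le)
  rw [← hx.init]
  exact hmono (Icc_subset_profileDomain ht (left_mem_Icc.mpr ht.1)) ht ht.1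

/-- Along the profile, `log (1 + x'²) - 2 (n - 2) log x` has derivative `2 x' (t x' - x) χ`. -/
lemma monotoneOn_log_energy (hx : IsSchwarzschildProfile n m R0 t0 tstar x x' x'')
    (hn : 3 ≤ n) (hm : 0 < m) (ht0 : 0 < t0) :
    MonotoneOn (fun t => Real.log (1 + x' t ^ 2) - 2 * ((n : ℝ) - 2) * Real.log (x t))
      (profileDomain t0 tstar) := by
  refine monotoneOn_of_hasDerivAt_nonneg convex_profileDomain
    (f' := fun t => 2 * x' t * ((t * x' t - x t) * schChi n m (x t) t)) (fun t ht => ?_)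
    (fun t ht => mul_nonneg (by linarith [hx.deriv_pos hn hm ht0 ht])
      (mul_nonneg (hx.mul_deriv_sub_nonneg hn hm ht0 ht)
        (schChi_pos (by omega) hm (hx.pos t ht.1 ht.2) t).le))
  have hxt := hx.pos t ht.1 ht.2
  have hsq : HasDerivAt (fun s => 1 + x' s ^ 2) (2 * x' t * x'' t) t :=
    (((hx.hasDeriv2 t ht.1 ht.2).pow 2).const_add 1).congr_deriv (by ring)
  refine ((hsq.log (by positivity)).sub
    (((hx.hasDeriv t ht.1 ht.2).log hxt.ne').const_mul (2 * ((n : ℝ) - 2)))).congr_deriv ?_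
  rw [hx.ode t ht.1 ht.2]
  field_simp
  ring

lemma pow_div_sqrt_le (hx : IsSchwarzschildProfile n m R0 t0 tstar x x' x'') (hn : 3 ≤ n)
    (hm : 0 < m) (ht0 : 0 < t0) (ht : t ∈ profileDomain t0 tstar) :
    (R0 / t0) ^ 2 * (x t / √(R0 ^ 2 - t0 ^ 2)) ^ (2 * (n - 2)) ≤ 1 + x' t ^ 2 := by
  have ht0D := Icc_subset_profileDomain ht (left_mem_Icc.mpr ht.1)
  have hx0 : 0 < x t0 := hx.pos t0 ht0D.1 ht0D.2
  have hxt : 0 < x t := hx.pos t ht.1 ht.2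
  have hx0sq : x t0 ^ 2 = R0 ^ 2 - t0 ^ 2 := by
    rw [hx.init] at hx0 ⊢
    exact Real.sq_sqrt (Real.sqrt_pos.mp hx0).le
  have hstart : (R0 / t0) ^ 2 = 1 + x' t0 ^ 2 := by
    have h := hx.initDeriv
    field_simp
    nlinarith [h]
  have hG := hx.monotoneOn_log_energy hn hm ht0 ht0D ht ht.1
  have hk : ((2 * (n - 2) : ℕ) : ℝ) = 2 * ((n : ℝ) - 2) := by
    push_cast [Nat.cast_sub (by omega : 2 ≤ n)]; ring
  have hr : 0 < x t / x t0 := div_pos hxt hx0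
  rw [← hx.init, hstart, ← Real.log_le_log_iff (by positivity) (by positivity),
    Real.log_mul (by positivity) (by positivity), Real.log_pow, hk,
    Real.log_div hxt.ne' hx0.ne']
  simp only at hG
  linarith

lemma one_le_deriv_mul_slabIntegrand (hx : IsSchwarzschildProfile n m R0 t0 tstar x x' x'')
    (hn : 3 ≤ n) (hm : 0 < m) (ht0 : 0 < t0) (htR : t0 < R0)
    (ht : t ∈ profileDomain t0 tstar) :
    1 ≤ x' t * slabIntegrand ((R0 / t0) ^ 2) √(R0 ^ 2 - t0 ^ 2) (2 * (n - 2)) (x t) :=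
  one_le_mul_slabIntegrand (one_lt_div_sq ht0 htR) (sqrt_sq_sub_sq_pos ht0 htR)
    (hx.sqrt_le_apply hn hm ht0 ht)
    (hx.deriv_pos hn hm ht0 ht).le (hx.pow_div_sqrt_le hn hm ht0 ht)

lemma sub_le_integral_slabIntegrand (hx : IsSchwarzschildProfile n m R0 t0 tstar x x' x'')
    (hn : 4 ≤ n) (hm : 0 < m) (ht0 : 0 < t0) (htR : t0 < R0) {T : ℝ}
    (hT : T ∈ profileDomain t0 tstar) :
    T - t0 ≤ ∫ μ in Ioi √(R0 ^ 2 - t0 ^ 2),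
      slabIntegrand ((R0 / t0) ^ 2) √(R0 ^ 2 - t0 ^ 2) (2 * (n - 2)) μ := by
  have hc := one_lt_div_sq ht0 htR
  have ha := sqrt_sq_sub_sq_pos ht0 htR
  have hsub := Icc_subset_profileDomain hT
  exact sub_le_setIntegral_Ioi_of_one_le_mul_comp hT.1
    (integrableOn_slabIntegrand hc ha (by omega)) slabIntegrand_nonneg
    (continuousOn_slabIntegrand hc ha) (fun t ht => hx.hasDeriv t (hsub ht).1 (hsub ht).2)
    (fun t ht => (hx.hasDeriv2 t (hsub ht).1 (hsub ht).2).continuousAt.continuousWithinAt)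
    hx.init (fun t ht => hx.sqrt_le_apply (by omega) hm ht0 (hsub ht))
    (fun t ht => hx.one_le_deriv_mul_slabIntegrand (by omega) hm ht0 htR (hsub ht))

end IsSchwarzschildProfile

theorem statement11_general (n : ℕ) (hn : 4 ≤ n) (m R0 t0 : ℝ) (hm : 0 < m)
    (ht0 : 0 < t0) (htR : t0 < R0) (tstar : EReal)
    (x x' x'' : ℝ → ℝ) (hx : IsSchwarzschildProfile n m R0 t0 tstar x x' x'') :
    IntegrableOn (fun μ : ℝ =>
        1 / Real.sqrt ((R0 / t0) ^ 2
          * (μ / Real.sqrt (R0 ^ 2 - t0 ^ 2)) ^ (2 * (n - 2)) - 1))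
      (Set.Ioi (Real.sqrt (R0 ^ 2 - t0 ^ 2))) ∧
    tstar ≤ ((t0 + ∫ μ in Set.Ioi (Real.sqrt (R0 ^ 2 - t0 ^ 2)),
        1 / Real.sqrt ((R0 / t0) ^ 2
          * (μ / Real.sqrt (R0 ^ 2 - t0 ^ 2)) ^ (2 * (n - 2)) - 1) : ℝ)
      : EReal) := by
  set F := slabIntegrand ((R0 / t0) ^ 2) √(R0 ^ 2 - t0 ^ 2) (2 * (n - 2))
  change IntegrableOn F _ ∧ tstar ≤ ((t0 + ∫ μ in _, F μ : ℝ) : EReal)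
  refine ⟨integrableOn_slabIntegrand (one_lt_div_sq ht0 htR) (sqrt_sq_sub_sq_pos ht0 htR)
    (by omega), ?_⟩
  by_contra! hlt
  obtain ⟨T, hh0T, hTt⟩ := EReal.lt_iff_exists_real_btwn.mp hlt
  have hh0T := EReal.coe_lt_coe_iff.mp hh0T
  have hF : 0 ≤ ∫ μ in Ioi √(R0 ^ 2 - t0 ^ 2), F μ :=
    setIntegral_nonneg measurableSet_Ioi fun μ _ => slabIntegrand_nonneg μ
  linarith [hx.sub_le_integral_slabIntegrand hn hm ht0 htR ⟨by linarith, hTt⟩]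

/-- for n ≥ 4 every Schwarzschild profile solution blows up in
finite time: its maximal existence time t* satisfies t* ≤ h0, where
h0 = t0 + ∫_{√(R0²−t0²)}^{+∞} dμ/√((R0/t0)²(μ/√(R0²−t0²))^{2(n−2)} − 1)
is finite (the integrand is integrable).  Hence the corresponding
hypersurface of revolution lies in the slab t0 ≤ xₙ ≤ h0. -/
theorem statement11 (n : ℕ) (hn : 4 ≤ n) (m R0 t0 : ℝ) (hm : 0 < m)
    (ht0 : 0 < t0) (htR : t0 < R0) (tstar : EReal) (hts : (t0 : EReal) < tstar)
    (x x' x'' : ℝ → ℝ) (hx : IsSchwarzschildProfile n m R0 t0 tstar x x' x'') :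
    IntegrableOn (fun μ : ℝ =>
        1 / Real.sqrt ((R0 / t0) ^ 2
          * (μ / Real.sqrt (R0 ^ 2 - t0 ^ 2)) ^ (2 * (n - 2)) - 1))
      (Set.Ioi (Real.sqrt (R0 ^ 2 - t0 ^ 2))) ∧
    tstar ≤ ((t0 + ∫ μ in Set.Ioi (Real.sqrt (R0 ^ 2 - t0 ^ 2)),
        1 / Real.sqrt ((R0 / t0) ^ 2
          * (μ / Real.sqrt (R0 ^ 2 - t0 ^ 2)) ^ (2 * (n - 2)) - 1) : ℝ)
      : EReal) :=
  statement11_general n hn m R0 t0 hm ht0 htR tstar x x' x'' hx
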